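/- Consider Bernoulli CMP on the graph ℕ (the path graph in which n and n+1 are adjacent for all n ≥ 0). For any expansion exponent α ≥ 1 there exists p < 1 such that, with positive probability under the product Bernoulli(p) measure, the cumulatively merged partition 𝒞(ℕ, r, α) contains an infinite cluster; i.e. the critical parameter p_c(α) is strictly less than 1. -/

import Mathlib

open scoped ENNReal NNReal
open MeasureTheory

namespace CMPPaper

variable {V : Type*}

/-- Graph distance between two subsets of vertices, valued in `ℝ≥0∞`
(`⊤` when one of the sets is empty). -/
noncomputable def setDist (G : SimpleGraph V) (A B : Set V) : ℝ≥0∞ :=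
  ⨅ (x : A) (y : B), (G.dist x.1 y.1 : ℝ≥0∞)

/-- Total weight `r(A) = Σ_{x ∈ A} r(x) ∈ [0,∞]` of a set of vertices. -/
noncomputable def wt (r : V → ℝ≥0) (A : Set V) : ℝ≥0∞ :=
  ∑' x : A, (r x.1 : ℝ≥0∞)

/-- A partition (encoded as a setoid) of the vertex set is `(r,α)`-admissible if any two
distinct clusters `C ≠ C'` satisfy `d(C,C') > min(r(C), r(C'))^α`. -/
def Admissible (G : SimpleGraph V) (r : V → ℝ≥0) (α : ℝ) (s : Setoid V) : Prop :=
  ∀ C ∈ s.classes, ∀ C' ∈ s.classes, C ≠ C' →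
    (min (wt r C) (wt r C')) ^ α < setDist G C C'

/-- The cumulatively merged partition: the finest `(r,α)`-admissible partition, i.e. the
intersection (infimum as setoids) of all `(r,α)`-admissible partitions. -/
noncomputable def CMP (G : SimpleGraph V) (r : V → ℝ≥0) (α : ℝ) : Setoid V :=
  sInf {s : Setoid V | Admissible G r α s}

/-- The cluster of the CMP containing `x`. -/
def cluster (G : SimpleGraph V) (r : V → ℝ≥0) (α : ℝ) (x : V) : Set V :=
  {y | (CMP G r α) x y}

/-- The ball `B(A, l) = {z : d(z,A) ≤ l}` around a set of vertices. -/
def ballSet (G : SimpleGraph V) (A : Set V) (l : ℝ≥0∞) : Set V :=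
  {z | ∃ a ∈ A, (G.dist z a : ℝ≥0∞) ≤ l}

/-- A subset `H` of the vertices is stable if every cluster `C` of the CMP of the induced
subgraph on `H` (with the restricted weights) satisfies `B(C, r(C)^α) ⊆ H`. -/
def IsStable (G : SimpleGraph V) (r : V → ℝ≥0) (α : ℝ) (H : Set V) : Prop :=
  ∀ C ∈ (CMP (G.induce H) (fun x : H => r x) α).classes,
    ballSet G (Subtype.val '' C) ((wt (fun x : H => r x) C) ^ α) ⊆ H

/-- The stabiliser of `W`: the smallest stable set containing `W`, i.e. the intersection of
all stable sets containing `W`. -/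
def stabiliser (G : SimpleGraph V) (r : V → ℝ≥0) (α : ℝ) (W : Set V) : Set V :=
  ⋂₀ {H : Set V | IsStable G r α H ∧ W ⊆ H}

open Classical in
/-- The merging operator `M_{x,y}`: if the clusters of `x` and `y` are distinct and
`d(x,y) ≤ min(r(𝒞_x), r(𝒞_y))^α`, merge them (take the smallest coarsening of `s`
relating `x` and `y`); otherwise leave the partition unchanged. -/
noncomputable def mergeOp (G : SimpleGraph V) (r : V → ℝ≥0) (α : ℝ) (x y : V)
    (s : Setoid V) : Setoid V :=
  if ¬ s x y ∧ (G.dist x y : ℝ≥0∞) ≤ (min (wt r {u | s x u}) (wt r {u | s y u})) ^ α then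
    sInf {t : Setoid V | s ≤ t ∧ t x y}
  else s

/-- The relation `C ↦ C'` (`C'` descends from `C`) on clusters of the CMP. -/
def Descends (G : SimpleGraph V) (r : V → ℝ≥0) (α : ℝ) (C C' : Set V) : Prop :=
  C ∈ (CMP G r α).classes ∧ C' ∈ (CMP G r α).classes ∧ C ≠ C' ∧
    setDist G C C' ≤ (wt r C) ^ α

/-- Integer part of an extended nonnegative real, valued in `ℕ∞`. -/
noncomputable def efloor (x : ℝ≥0∞) : ℕ∞ :=
  if x = ⊤ then ⊤ else (⌊x.toReal⌋₊ : ℕ∞)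

/-- The bound `max(w log₂ w / 2, 0)` (for `α = 1`), resp. `w^α/(2^α-2)` (for `α ≠ 1`),
on the diameter of a cluster of total weight `w`. -/
noncomputable def diamBound (α : ℝ) (w : ℝ≥0∞) : ℝ≥0∞ :=
  if α = 1 then
    (if w = ⊤ then ⊤ else ENNReal.ofReal (max (w.toReal * Real.logb 2 w.toReal / 2) 0))
  else w ^ α / ((2 : ℝ≥0∞) ^ α - 2)

/-- The relation `C →η C'` on clusters of the CMP:  `d(C,C') ≤ η·r(C)^α`. -/
def EtaDesc (G : SimpleGraph V) (r : V → ℝ≥0) (α η : ℝ) (C C' : Set V) : Prop :=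
  C ∈ (CMP G r α).classes ∧ C' ∈ (CMP G r α).classes ∧ C ≠ C' ∧
    setDist G C C' ≤ ENNReal.ofReal η * (wt r C) ^ α

/-- The `η`-stabiliser of a vertex `x`: the union of `𝒞_x` together with all clusters
reachable from `𝒞_x` by a finite oriented path for the relation `→η`. -/
def etaStab (G : SimpleGraph V) (r : V → ℝ≥0) (α η : ℝ) (x : V) : Set V :=
  ⋃₀ {C' | Relation.ReflTransGen (EtaDesc G r α η) (cluster G r α x) C'}

/-- The path graph on `ℕ`: `m` and `m+1` are adjacent. -/
def pathGraphN : SimpleGraph ℕ := SimpleGraph.fromRel (fun m n => n = m + 1)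

/-- The two-sided path graph on `ℤ`: `k` and `k+1` are adjacent. -/
def pathGraphZ : SimpleGraph ℤ := SimpleGraph.fromRel (fun a b => b = a + 1)

/-- The hypercubic lattice `ℤ^d`: `x` and `y` are adjacent iff `‖x-y‖₁ = 1`. -/
def latticeGraph (d : ℕ) : SimpleGraph (Fin d → ℤ) :=
  SimpleGraph.fromRel (fun x y => (∑ i, |x i - y i|) = 1)

/-- The CMP of the weighted graph `(G, r)` with expansion exponent `α` has an
infinite cluster. -/
def HasInfiniteCluster (G : SimpleGraph V) (r : V → ℝ≥0) (α : ℝ) : Prop :=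
  ∃ C ∈ (CMP G r α).classes, C.Infinite

/-- `w` is an i.i.d. family of Bernoulli(`p`) weights indexed by `V`, under the
probability measure `μ`. -/
def IsBernoulliField {Ω : Type*} [MeasurableSpace Ω] (μ : Measure Ω)
    (p : ℝ) (w : Ω → V → ℝ≥0) : Prop :=
  (∀ x : V, Measurable fun ω => w ω x) ∧
  (∀ ω x, w ω x = 0 ∨ w ω x = 1) ∧
  (∀ x : V, μ {ω | w ω x = 1} = ENNReal.ofReal p) ∧
  ProbabilityTheory.iIndepFun (m := fun _ : V => inferInstance) (fun x ω => w ω x) μ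

/-- `w` is an i.i.d. family of weights indexed by `V`, each with law `ν`, under the
probability measure `μ`. -/
def IsIIDField {Ω : Type*} [MeasurableSpace Ω] (μ : Measure Ω)
    (ν : Measure ℝ≥0) (w : Ω → V → ℝ≥0) : Prop :=
  (∀ x : V, Measurable fun ω => w ω x) ∧
  (∀ x : V, μ.map (fun ω => w ω x) = ν) ∧
  ProbabilityTheory.iIndepFun (m := fun _ : V => inferInstance) (fun x ω => w ω x) μ

/-! Call a set of vertices forced if every admissible partition puts it into one class; a forced
set lies in a single cluster of the CMP, and two forced sets at distance `D` are forced together as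
soon as both weigh at least `D` (here `α ≥ 1` is used). The proof is a multiscale argument. A
level-`0` block is an interval of `64` sites, good when all its weights are `1`; a level-`(j+1)`
block consists of `2 ^ (j + 6)` level-`j` blocks and is good when at most one of them is bad. By
induction a good block contains a forced set of more than half of its sites reaching close to both
of its ends, because runs of consecutive good children merge, even across one bad child.
Independence of disjoint blocks gives `θ_{j+1} ≤ (2 ^ (j + 6))² θ_j²` for the probability `θ_j`
that a level-`j` block is bad, so for `p` close to `1` the `θ_j` decay doubly exponentially. With
positive probability the blocks `0, 1, 2` are then good at every level, and the forced sets of the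
blocks `[0, blockLen j)` can be chosen increasing, forming an infinite cluster. -/

section Forced

variable (G : SimpleGraph V) (r : V → ℝ≥0) (α : ℝ)

def IsForced (X : Set V) : Prop :=
  ∀ s : Setoid V, Admissible G r α s → ∀ x ∈ X, ∀ y ∈ X, s x y

variable {G r α}

lemma wt_mono {A B : Set V} (h : A ⊆ B) : wt r A ≤ wt r B :=
  ENNReal.tsum_mono_subtype (fun x => (r x : ℝ≥0∞)) h

lemma card_le_wt {X : Finset V} (h : ∀ x ∈ X, 1 ≤ r x) : (X.card : ℝ≥0∞) ≤ wt r X := by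
  rw [wt, Finset.tsum_subtype' X fun x => (r x : ℝ≥0∞), Finset.card_eq_sum_ones, Nat.cast_sum]
  exact Finset.sum_le_sum fun x hx => by exact_mod_cast h x hx

lemma isForced_singleton (x : V) : IsForced G r α {x} := by
  intro s _ a ha b hb
  rw [Set.mem_singleton_iff] at ha hb
  subst ha hb
  exact s.refl' _

lemma setDist_le_dist {A B : Set V} {x y : V} (hx : x ∈ A) (hy : y ∈ B) :
    setDist G A B ≤ G.dist x y :=
  iInf_le_of_le ⟨x, hx⟩ (iInf_le (fun b : B => (G.dist x b.1 : ℝ≥0∞)) ⟨y, hy⟩)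

lemma IsForced.subset_cluster {X : Set V} (hX : IsForced G r α X) {x : V} (hx : x ∈ X) :
    X ⊆ cluster G r α x :=
  fun y hy => Setoid.sInf_iff.mpr fun s hs => hX s hs x hx y hy

/-- An admissible partition separating `X` and `Y` would have two clusters at distance at most
`min (r C) (r C') ^ α`. -/
lemma IsForced.union (hα : 0 ≤ α) {X Y : Set V} (hX : IsForced G r α X) (hY : IsForced G r α Y)
    {x y : V} (hx : x ∈ X) (hy : y ∈ Y)
    (hxy : (G.dist x y : ℝ≥0∞) ≤ min (wt r X) (wt r Y) ^ α) : IsForced G r α (X ∪ Y) := by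
  intro s hs
  have hsxy : s x y := by
    by_contra hne
    have hXC : X ⊆ {u | s u x} := fun u hu => hX s hs u hu x hx
    have hYC : Y ⊆ {u | s u y} := fun u hu => hY s hs u hu y hy
    have hCC : {u | s u x} ≠ {u | s u y} :=
      fun h => hne (show x ∈ {u | s u y} from h ▸ s.refl' x)
    refine (hs _ (s.mem_classes x) _ (s.mem_classes y) hCC).not_ge ?_
    calc setDist G {u | s u x} {u | s u y}
        ≤ G.dist x y := setDist_le_dist (s.refl' x) (s.refl' y)
      _ ≤ min (wt r X) (wt r Y) ^ α := hxy
      _ ≤ _ := ENNReal.rpow_le_rpow (min_le_min (wt_mono hXC) (wt_mono hYC)) hα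
  rintro a (ha | ha) b (hb | hb)
  · exact hX s hs a ha b hb
  · exact s.trans' (hX s hs a ha x hx) (s.trans' hsxy (hY s hs y hy b hb))
  · exact s.trans' (hY s hs a ha y hy) (s.trans' (s.symm' hsxy) (hX s hs x hx b hb))
  · exact hY s hs a ha b hb

end Forced

lemma pathGraphN_dist_le {a b : ℕ} (h : a ≤ b) : pathGraphN.dist a b ≤ b - a := by
  obtain ⟨d, rfl⟩ := Nat.exists_eq_add_of_le h
  have hwalk : ∀ d, ∃ p : pathGraphN.Walk a (a + d), p.length = d := by
    intro d
    induction d with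
    | zero => exact ⟨.nil, rfl⟩
    | succ d ih =>
      obtain ⟨p, hp⟩ := ih
      have hadj : pathGraphN.Adj (a + d) (a + d + 1) := by simp [pathGraphN]
      exact ⟨p.concat hadj, by simp [hp]⟩
  obtain ⟨p, hp⟩ := hwalk d
  simpa [hp] using SimpleGraph.dist_le p

structure Spans (r : ℕ → ℝ≥0) (α : ℝ) (a b δ : ℕ) (X : Finset ℕ) : Prop where
  forced : IsForced pathGraphN r α X
  one_le : ∀ x ∈ X, 1 ≤ r x
  subset : X ⊆ Finset.Ico a b
  exists_near_left : ∃ u ∈ X, u < a + δ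
  exists_near_right : ∃ v ∈ X, b ≤ v + δ

section Spans

variable {r : ℕ → ℝ≥0} {α : ℝ}

lemma Spans.widen {a b δ a' b' δ' : ℕ} {X : Finset ℕ} (hX : Spans r α a b δ X)
    (ha : a' ≤ a) (ha' : a + δ ≤ a' + δ') (hb : b ≤ b') (hb' : b' + δ ≤ b + δ') :
    Spans r α a' b' δ' X := by
  obtain ⟨u, hu, hua⟩ := hX.exists_near_left
  obtain ⟨v, hv, hvb⟩ := hX.exists_near_right
  exact ⟨hX.forced, hX.one_le, hX.subset.trans (Finset.Ico_subset_Ico ha hb),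
    ⟨u, hu, by omega⟩, ⟨v, hv, by omega⟩⟩

lemma Spans.disjoint {a b δ b' c : ℕ} {X Y : Finset ℕ} (hX : Spans r α a b δ X)
    (hY : Spans r α b' c δ Y) (hb : b ≤ b') : Disjoint X Y :=
  Finset.disjoint_left.2 fun x hxX hxY => by
    have := Finset.mem_Ico.1 (hX.subset hxX)
    have := Finset.mem_Ico.1 (hY.subset hxY)
    omega

/-- The nearest points `v ∈ X`, `u ∈ Y` satisfy `u - v ≤ b' - b + 2δ - 1 ≤ min |X| |Y|`. -/
lemma Spans.union (hα : 1 ≤ α) {a b δ b' c : ℕ} {X Y : Finset ℕ} (hX : Spans r α a b δ X)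
    (hY : Spans r α b' c δ Y) (hb : b ≤ b') (hXc : b' + 2 * δ ≤ b + X.card + 1)
    (hYc : b' + 2 * δ ≤ b + Y.card + 1) : Spans r α a c δ (X ∪ Y) := by
  obtain ⟨v, hvX, hv⟩ := hX.exists_near_right
  obtain ⟨u, huY, hu⟩ := hY.exists_near_left
  have hvb := Finset.mem_Ico.1 (hX.subset hvX)
  have hub := Finset.mem_Ico.1 (hY.subset huY)
  have hmin : ((u - v : ℕ) : ℝ≥0∞) ≤ min (wt r X) (wt r Y) :=
    le_min ((Nat.cast_le.2 (by omega)).trans (card_le_wt hX.one_le))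
      ((Nat.cast_le.2 (by omega)).trans (card_le_wt hY.one_le))
  have hforced : IsForced pathGraphN r α (↑X ∪ ↑Y) := by
    refine hX.forced.union (by linarith) hY.forced hvX huY ?_
    calc (pathGraphN.dist v u : ℝ≥0∞) ≤ (u - v : ℕ) := Nat.cast_le.2 (pathGraphN_dist_le (by omega))
      _ ≤ min (wt r X) (wt r Y) := hmin
      _ ≤ _ := ENNReal.le_rpow_self_of_one_le ((Nat.one_le_cast.2 (by omega)).trans hmin) hα
  obtain ⟨u₀, hu₀, hu₀a⟩ := hX.exists_near_left
  obtain ⟨v₀, hv₀, hv₀c⟩ := hY.exists_near_right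
  refine ⟨by rwa [Finset.coe_union], Finset.forall_mem_union.2 ⟨hX.one_le, hY.one_le⟩,
    Finset.union_subset (hX.subset.trans (Finset.Ico_subset_Ico le_rfl (by omega)))
      (hY.subset.trans (Finset.Ico_subset_Ico (by omega) le_rfl)),
    ⟨u₀, Finset.mem_union_left _ hu₀, hu₀a⟩, ⟨v₀, Finset.mem_union_right _ hv₀, hv₀c⟩⟩

lemma spans_Ico_succ (x : ℕ) (h : 1 ≤ r x) : Spans r α x (x + 1) 1 (Finset.Ico x (x + 1)) := by
  rw [Nat.Ico_succ_singleton]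
  exact ⟨by simpa using isForced_singleton x, by simpa using h, by simp, ⟨x, by simp⟩, ⟨x, by simp⟩⟩

lemma spans_Ico (hα : 1 ≤ α) {a n : ℕ} (hn : 0 < n) (h : ∀ x ∈ Finset.Ico a (a + n), 1 ≤ r x) :
    Spans r α a (a + n) 1 (Finset.Ico a (a + n)) := by
  induction n, hn using Nat.le_induction with
  | base => exact spans_Ico_succ a (h a (by simp))
  | succ n hn ih =>
    rw [← add_assoc, ← Finset.Ico_union_Ico_eq_Ico (b := a + n) (by omega) (by omega)]
    refine (ih fun x hx => h x ?_).union hα (spans_Ico_succ _ (h (a + n) ?_)) le_rfl ?_ (by simp)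
    · simp only [Finset.mem_Ico] at hx ⊢; omega
    · simp only [Finset.mem_Ico]; omega
    · rw [Nat.card_Ico]; omega

end Spans

/-- Level-`j` blocks have length `blockLen j`; the level-`(j+1)` block `i` is the union of the
`2 ^ (j + 6)` level-`j` blocks `i * 2 ^ (j + 6) + t`, its children. -/
def blockLen : ℕ → ℕ
  | 0 => 64
  | j + 1 => 2 ^ (j + 6) * blockLen j

lemma two_pow_le_blockLen (j : ℕ) : 2 ^ (j + 6) ≤ blockLen j := by
  induction j with
  | zero => simp [blockLen]
  | succ j ih =>
    rw [show j + 1 + 6 = j + 6 + 1 by omega, pow_succ, blockLen]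
    exact Nat.mul_le_mul_left _ ((Nat.le_self_pow (by omega) 2).trans ih)

lemma eight_dvd_blockLen (j : ℕ) : 8 ∣ blockLen j := by
  induction j with
  | zero => norm_num [blockLen]
  | succ j ih => exact Dvd.dvd.mul_left ih _

def block (j i : ℕ) : Finset ℕ :=
  Finset.Ico (i * blockLen j) ((i + 1) * blockLen j)

lemma block_subset_block_succ {j i t : ℕ} (ht : t < 2 ^ (j + 6)) :
    block j (i * 2 ^ (j + 6) + t) ⊆ block (j + 1) i := by
  have hL : blockLen (j + 1) = 2 ^ (j + 6) * blockLen j := rfl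
  have hlo : (i * 2 ^ (j + 6) + t) * blockLen j = i * blockLen (j + 1) + t * blockLen j := by
    rw [hL]; ring
  have hhi : (i * 2 ^ (j + 6) + t + 1) * blockLen j =
      i * blockLen (j + 1) + (t + 1) * blockLen j := by
    rw [hL]; ring
  have hpar : (i + 1) * blockLen (j + 1) = i * blockLen (j + 1) + 2 ^ (j + 6) * blockLen j := by
    rw [hL]; ring
  have := Nat.mul_le_mul_right (blockLen j) (show t + 1 ≤ 2 ^ (j + 6) by omega)
  exact Finset.Ico_subset_Ico (by omega) (by omega)

lemma disjoint_block {j i₁ i₂ : ℕ} (h : i₁ ≠ i₂) :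
    Disjoint (block j i₁ : Set ℕ) (block j i₂) := by
  rw [Finset.disjoint_coe, Finset.disjoint_left]
  intro x hx₁ hx₂
  simp only [block, Finset.mem_Ico] at hx₁ hx₂
  rcases h.lt_or_gt with h | h
  · have := Nat.mul_le_mul_right (blockLen j) (show i₁ + 1 ≤ i₂ by omega); omega
  · have := Nat.mul_le_mul_right (blockLen j) (show i₂ + 1 ≤ i₁ by omega); omega

def GoodBlock (r : ℕ → ℝ≥0) : ℕ → ℕ → Prop
  | 0, i => ∀ x ∈ block 0 i, 1 ≤ r x
  | j + 1, i => ∀ t₁ < 2 ^ (j + 6), ∀ t₂ < 2 ^ (j + 6), t₁ ≠ t₂ →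
      GoodBlock r j (i * 2 ^ (j + 6) + t₁) ∨ GoodBlock r j (i * 2 ^ (j + 6) + t₂)

lemma GoodBlock.exists_bad_child {r : ℕ → ℝ≥0} {j i : ℕ} (hg : GoodBlock r (j + 1) i) :
    ∃ b ≤ 2 ^ (j + 6), ∀ t < 2 ^ (j + 6), t ≠ b → GoodBlock r j (i * 2 ^ (j + 6) + t) := by
  by_cases h : ∃ b < 2 ^ (j + 6), ¬ GoodBlock r j (i * 2 ^ (j + 6) + b)
  · obtain ⟨b, hb, hbad⟩ := h
    exact ⟨b, hb.le, fun t ht htb => (hg t ht b hb htb).resolve_right hbad⟩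
  · push Not at h
    exact ⟨2 ^ (j + 6), le_rfl, fun t ht _ => h t ht⟩

/-- `Y` spans the level-`j` blocks `c, …, e - 1` and has the size of `n` blocks at density
`1/2 + 2^-(j+1)`. The density may drop with `j` because each level loses at most four of its
`2 ^ (j + 6)` children, and staying above `1/2` is what lets runs merge across one bad block. -/
def Run (r : ℕ → ℝ≥0) (α : ℝ) (j c e n : ℕ) (Y : Finset ℕ) : Prop :=
  Spans r α (c * blockLen j) (e * blockLen j) (blockLen j / 8) Y ∧
    n * ((2 ^ j + 1) * blockLen j) ≤ 2 ^ (j + 1) * Y.card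

def BlockCluster (r : ℕ → ℝ≥0) (α : ℝ) (j i : ℕ) (X : Finset ℕ) : Prop :=
  Run r α j i (i + 1) 1 X

section BlockCluster

variable {r : ℕ → ℝ≥0} {α : ℝ}

lemma Run.mul_blockLen_le_two_mul_card {j c e n : ℕ} {Y : Finset ℕ} (hY : Run r α j c e n Y) :
    n * blockLen j ≤ 2 * Y.card := by
  refine Nat.le_of_mul_le_mul_left ?_ (Nat.two_pow_pos j)
  calc 2 ^ j * (n * blockLen j) ≤ n * ((2 ^ j + 1) * blockLen j) := by nlinarith
    _ ≤ 2 ^ (j + 1) * Y.card := hY.2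
    _ = 2 ^ j * (2 * Y.card) := by ring

lemma BlockCluster.lt_card {j i : ℕ} {X : Finset ℕ} (hX : BlockCluster r α j i X) :
    j < X.card := by
  have hX2 := hX.mul_blockLen_le_two_mul_card
  have := two_pow_le_blockLen j
  have := j.lt_two_pow_self
  rw [pow_add] at *
  omega

lemma Run.union (hα : 1 ≤ α) {j c e e' g n n' : ℕ} {X Y : Finset ℕ} (hX : Run r α j c e n X)
    (hY : Run r α j (e + g) e' n' Y) (hn : 2 * g + 1 ≤ n) (hn' : 2 * g + 1 ≤ n') :
    Run r α j c e' (n + n') (X ∪ Y) := by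
  have h8 := Nat.mul_div_cancel' (eight_dvd_blockLen j)
  have hXc := hX.mul_blockLen_le_two_mul_card
  have hYc := hY.mul_blockLen_le_two_mul_card
  have hgn := Nat.mul_le_mul_right (blockLen j) hn
  have hgn' := Nat.mul_le_mul_right (blockLen j) hn'
  have hsplit : (e + g) * blockLen j = e * blockLen j + g * blockLen j := add_mul _ _ _
  have h2g : (2 * g + 1) * blockLen j = 2 * (g * blockLen j) + blockLen j := by ring
  have hle : e * blockLen j ≤ (e + g) * blockLen j := by omega
  refine ⟨hX.1.union hα hY.1 hle (by omega) (by omega), ?_⟩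
  rw [Finset.card_union_of_disjoint (hX.1.disjoint hY.1 hle), add_mul, mul_add]
  exact add_le_add hX.2 hY.2

lemma BlockCluster.of_run {j i s e n : ℕ} {Y : Finset ℕ}
    (hY : Run r α j (i * 2 ^ (j + 6) + s) (i * 2 ^ (j + 6) + e) n Y) (hs : s ≤ 3)
    (he : e ≤ 2 ^ (j + 6)) (he' : 2 ^ (j + 6) ≤ e + 3) (hn : 2 ^ (j + 6) ≤ n + 3) :
    BlockCluster r α (j + 1) i Y := by
  obtain ⟨hY, hcard⟩ := hY
  unfold BlockCluster Run
  rw [show blockLen (j + 1) = 2 ^ (j + 6) * blockLen j from rfl]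
  have h8 := Nat.mul_div_cancel' (eight_dvd_blockLen j)
  have h8' := Nat.mul_div_cancel' ((eight_dvd_blockLen j).mul_left (2 ^ (j + 6)))
  have hpos : 0 < blockLen j := (Nat.two_pow_pos _).trans_le (two_pow_le_blockLen j)
  have ha : 1 ≤ 2 ^ j := Nat.one_le_two_pow
  rw [show 2 ^ (j + 6) = 64 * 2 ^ j by ring] at *
  rw [show 2 ^ (j + 1 + 1) = 4 * 2 ^ j by ring, show 2 ^ (j + 1) = 2 * 2 ^ j by ring] at *
  generalize blockLen j = L at *
  generalize 2 ^ j = a at *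
  have e₁ : (i * (64 * a) + s) * L = i * (64 * a * L) + s * L := by ring
  have e₂ : (i * (64 * a) + e) * L = i * (64 * a * L) + e * L := by ring
  have e₃ : (i + 1) * (64 * a * L) = i * (64 * a * L) + 64 * a * L := by ring
  have hsL := Nat.mul_le_mul_right L hs
  have heL := Nat.mul_le_mul_right L he
  have heL' : 64 * a * L ≤ e * L + 3 * L := by rw [← add_mul]; exact Nat.mul_le_mul_right L he'
  have hM := Nat.mul_le_mul_right L (by omega : 64 ≤ 64 * a)
  refine ⟨?_, by nlinarith [Nat.mul_le_mul_right ((a + 1) * L) hn]⟩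
  rw [e₁, e₂] at hY
  rw [e₃]
  generalize i * (64 * a * L) = P at *
  generalize 64 * a * L = M at *
  exact hY.widen (by omega) (by omega) (by omega) (by omega)

lemma exists_run_of_blockCluster (hα : 1 ≤ α) {j c n : ℕ} {K : Finset ℕ}
    (hK : BlockCluster r α j c K) (hn : 0 < n) (hcl : ∀ t, 0 < t → t < n → ∃ X, BlockCluster r α j (c + t) X) :
    ∃ Y, K ⊆ Y ∧ Run r α j c (c + n) n Y := by
  induction n, hn using Nat.le_induction with
  | base => exact ⟨K, subset_rfl, hK⟩
  | succ n hn ih =>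
    obtain ⟨Y, hKY, hY⟩ := ih fun t ht htn => hcl t ht (by omega)
    obtain ⟨X, hX⟩ := hcl n hn (by omega)
    exact ⟨Y ∪ X, hKY.trans Finset.subset_union_left, hY.union hα (g := 0) hX hn le_rfl⟩

/-- If `b + 4 ≤ 2 ^ (j + 6)` the runs on both sides of the skipped child `b` have at least three
blocks each, enough to merge across the gap; otherwise the run left of `b` alone is long enough. -/
lemma exists_blockCluster_succ_superset_of_skip (hα : 1 ≤ α) {j i b : ℕ} {K : Finset ℕ}
    (hK : BlockCluster r α j (i * 2 ^ (j + 6)) K) (hb : 3 ≤ b) (hbm : b ≤ 2 ^ (j + 6))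
    (hcl : ∀ t, 0 < t → t < 2 ^ (j + 6) → t ≠ b →
      ∃ X, BlockCluster r α j (i * 2 ^ (j + 6) + t) X) :
    ∃ X, BlockCluster r α (j + 1) i X ∧ K ⊆ X := by
  set m := 2 ^ (j + 6)
  obtain ⟨Yl, hKYl, hYl⟩ := exists_run_of_blockCluster hα hK (n := b) (by omega)
    fun t ht htb => hcl t ht (by omega) (by omega)
  by_cases hbm4 : b + 4 ≤ m
  · obtain ⟨K', hK'⟩ := hcl (b + 1) (by omega) (by omega) (by omega)
    obtain ⟨Yr, -, hYr⟩ := exists_run_of_blockCluster hα hK' (n := m - (b + 1)) (by omega)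
      fun t ht htn => by
        rw [add_assoc]
        exact hcl (b + 1 + t) (by omega) (by omega) (by omega)
    have hY := hYl.union hα (g := 1) hYr (by omega) (by omega)
    rw [add_assoc, show b + 1 + (m - (b + 1)) = m by omega] at hY
    exact ⟨_, BlockCluster.of_run (s := 0) hY (by omega) le_rfl (by omega) (by omega),
      hKYl.trans Finset.subset_union_left⟩
  · exact ⟨Yl, BlockCluster.of_run (s := 0) hYl (by omega) hbm (by omega) (by omega), hKYl⟩

theorem exists_blockCluster_of_goodBlock (hα : 1 ≤ α) :
    ∀ j i, GoodBlock r j i → ∃ X, BlockCluster r α j i X := by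
  intro j
  induction j with
  | zero =>
    intro i hg
    have hg' : ∀ x ∈ Finset.Ico (i * 64) (i * 64 + 64), 1 ≤ r x := by
      simpa [GoodBlock, block, blockLen, add_one_mul] using hg
    refine ⟨Finset.Ico (i * 64) (i * 64 + 64), ?_, by simp [blockLen]⟩
    show Spans r α (i * 64) ((i + 1) * 64) (64 / 8) _
    rw [add_one_mul]
    exact (spans_Ico hα (by norm_num) hg').widen le_rfl (by omega) le_rfl (by omega)
  | succ j ih =>
    intro i hg
    obtain ⟨b, hbm, hgood⟩ := hg.exists_bad_child
    have hcl t (ht : t < 2 ^ (j + 6)) (htb : t ≠ b) := ih _ (hgood t ht htb)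
    rcases le_or_gt 3 b with hb | hb
    · obtain ⟨K, hK⟩ := hcl 0 (by positivity) (by omega)
      obtain ⟨X, hX, -⟩ := exists_blockCluster_succ_superset_of_skip hα hK hb hbm
        fun t _ ht htb => hcl t ht htb
      exact ⟨X, hX⟩
    · have hm : 64 ≤ 2 ^ (j + 6) := by
        rw [pow_add]; have := Nat.one_le_two_pow (n := j); omega
      obtain ⟨K, hK⟩ := hcl (b + 1) (by omega) (by omega)
      obtain ⟨Y, -, hY⟩ := exists_run_of_blockCluster hα hK (n := 2 ^ (j + 6) - (b + 1)) (by omega)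
        fun t ht htn => by
          rw [add_assoc]
          exact hcl _ (by omega) (by omega)
      rw [add_assoc, show b + 1 + (2 ^ (j + 6) - (b + 1)) = 2 ^ (j + 6) by omega] at hY
      exact ⟨Y, BlockCluster.of_run hY (by omega) le_rfl (by omega) (by omega)⟩

lemma exists_blockCluster_succ_superset (hα : 1 ≤ α) {j i : ℕ} {K : Finset ℕ}
    (hK : BlockCluster r α j (i * 2 ^ (j + 6)) K) (hg : GoodBlock r (j + 1) i)
    (h₁ : GoodBlock r j (i * 2 ^ (j + 6) + 1)) (h₂ : GoodBlock r j (i * 2 ^ (j + 6) + 2)) :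
    ∃ X, BlockCluster r α (j + 1) i X ∧ K ⊆ X := by
  obtain ⟨b, hbm, hgood⟩ := hg.exists_bad_child
  have hm : 3 ≤ 2 ^ (j + 6) := by
    rw [pow_add]; have := Nat.one_le_two_pow (n := j); omega
  rcases le_or_gt 3 b with hb | hb
  · exact exists_blockCluster_succ_superset_of_skip hα hK hb hbm
      fun t _ ht htb => exists_blockCluster_of_goodBlock hα j _ (hgood t ht htb)
  · refine exists_blockCluster_succ_superset_of_skip hα hK hm le_rfl
      fun t ht₀ ht _ => exists_blockCluster_of_goodBlock hα j _ ?_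
    rcases (show t = 1 ∨ t = 2 ∨ 2 < t by omega) with rfl | rfl | ht₃
    exacts [h₁, h₂, hgood t ht (by omega)]

theorem hasInfiniteCluster_of_goodBlock (hα : 1 ≤ α)
    (h : ∀ j, GoodBlock r j 0 ∧ GoodBlock r j 1 ∧ GoodBlock r j 2) :
    HasInfiniteCluster pathGraphN r α := by
  obtain ⟨X₀, hX₀⟩ := exists_blockCluster_of_goodBlock hα 0 0 (h 0).1
  obtain ⟨z, hz, -⟩ := hX₀.1.exists_near_left
  have hspine : ∀ j, ∃ X, BlockCluster r α j 0 X ∧ z ∈ X := by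
    intro j
    induction j with
    | zero => exact ⟨X₀, hX₀, hz⟩
    | succ j ih =>
      obtain ⟨X, hX, hzX⟩ := ih
      obtain ⟨X', hX', hXX'⟩ := exists_blockCluster_succ_superset hα (i := 0)
        (by simpa using hX) (h (j + 1)).1 (by simpa using (h j).2.1) (by simpa using (h j).2.2)
      exact ⟨X', hX', hXX' hzX⟩
  refine ⟨cluster pathGraphN r α z,
    ⟨z, Set.ext fun y => ⟨(CMP _ _ _).symm', (CMP _ _ _).symm'⟩⟩, fun hfin => ?_⟩
  obtain ⟨X, hX, hzX⟩ := hspine hfin.toFinset.card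
  have hsub : X ⊆ hfin.toFinset :=
    fun y hy => hfin.mem_toFinset.2 (hX.1.forced.subset_cluster hzX hy)
  exact (Finset.card_le_card hsub).not_gt hX.lt_card

end BlockCluster

section Probability

open ProbabilityTheory

variable {Ω : Type*} {w : Ω → ℕ → ℝ≥0}

abbrev weightSigma (w : Ω → ℕ → ℝ≥0) (S : Set ℕ) : MeasurableSpace Ω :=
  ⨆ x ∈ S, MeasurableSpace.comap (fun ω => w ω x) inferInstance

lemma weightSigma_mono {S T : Set ℕ} (h : S ⊆ T) : weightSigma w S ≤ weightSigma w T :=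
  biSup_mono fun _ hx => h hx

lemma measurable_weightSigma {S : Set ℕ} {x : ℕ} (hx : x ∈ S) :
    Measurable[weightSigma w S] fun ω => w ω x :=
  (comap_measurable _).mono (le_iSup₂ (f := fun x (_ : x ∈ S) =>
    MeasurableSpace.comap (fun ω => w ω x) inferInstance) x hx) le_rfl

lemma measurableSet_goodBlock (j i : ℕ) :
    MeasurableSet[weightSigma w (block j i)] {ω | GoodBlock (w ω) j i} := by
  induction j generalizing i with
  | zero =>
    have : {ω | GoodBlock (w ω) 0 i} = ⋂ x ∈ block 0 i, {ω | 1 ≤ w ω x} := by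
      ext; simp [GoodBlock]
    rw [this]
    exact Finset.measurableSet_biInter _ fun x hx =>
      measurableSet_le measurable_const (measurable_weightSigma hx)
  | succ j ih =>
    have : {ω | GoodBlock (w ω) (j + 1) i} = ⋂ t₁ ∈ Finset.range (2 ^ (j + 6)),
        ⋂ t₂ ∈ Finset.range (2 ^ (j + 6)), ⋂ (_ : t₁ ≠ t₂),
          {ω | GoodBlock (w ω) j (i * 2 ^ (j + 6) + t₁)} ∪
            {ω | GoodBlock (w ω) j (i * 2 ^ (j + 6) + t₂)} := by
      ext; simp [GoodBlock]
    have hchild {t} (ht : t ∈ Finset.range (2 ^ (j + 6))) :=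
      weightSigma_mono (w := w) (Finset.coe_subset.2 (block_subset_block_succ
        (i := i) (Finset.mem_range.1 ht))) _ (ih (i * 2 ^ (j + 6) + t))
    rw [this]
    exact Finset.measurableSet_biInter _ fun t₁ ht₁ => Finset.measurableSet_biInter _ fun t₂ ht₂ =>
      MeasurableSet.iInter fun _ => (hchild ht₁).union (hchild ht₂)

variable [MeasurableSpace Ω] {μ : Measure Ω}

lemma measure_inter_not_goodBlock_eq_mul (hmeas : ∀ x, Measurable fun ω => w ω x)
    (hind : iIndepFun (m := fun _ => inferInstance) (fun x ω => w ω x) μ) {j i₁ i₂ : ℕ}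
    (h : i₁ ≠ i₂) :
    μ ({ω | ¬ GoodBlock (w ω) j i₁} ∩ {ω | ¬ GoodBlock (w ω) j i₂}) =
      μ {ω | ¬ GoodBlock (w ω) j i₁} * μ {ω | ¬ GoodBlock (w ω) j i₂} :=
  ((indep_iSup_of_disjoint (fun x => (hmeas x).comap_le) ((iIndepFun_iff_iIndep _ _ _).1 hind)
    (disjoint_block h)).indepSet_of_measurableSet (measurableSet_goodBlock j i₁).compl
    (measurableSet_goodBlock j i₂).compl).measure_inter_eq_mul

lemma measure_not_goodBlock_zero_le {q : ℝ≥0∞} (hq : ∀ x, μ {ω | ¬ 1 ≤ w ω x} ≤ q) (i : ℕ) :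
    μ {ω | ¬ GoodBlock (w ω) 0 i} ≤ 64 * q :=
  calc μ {ω | ¬ GoodBlock (w ω) 0 i}
      ≤ μ (⋃ x ∈ block 0 i, {ω | ¬ 1 ≤ w ω x}) :=
        measure_mono fun ω hω => by simpa [GoodBlock] using hω
    _ ≤ ∑ x ∈ block 0 i, μ {ω | ¬ 1 ≤ w ω x} := measure_biUnion_finset_le _ _
    _ ≤ ∑ _x ∈ block 0 i, q := Finset.sum_le_sum fun x _ => hq x
    _ = 64 * q := by simp [block, blockLen, add_one_mul]

lemma measure_not_goodBlock_succ_le (hmeas : ∀ x, Measurable fun ω => w ω x)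
    (hind : iIndepFun (m := fun _ => inferInstance) (fun x ω => w ω x) μ) {j : ℕ} {θ : ℝ≥0∞}
    (hθ : ∀ i, μ {ω | ¬ GoodBlock (w ω) j i} ≤ θ) (i : ℕ) :
    μ {ω | ¬ GoodBlock (w ω) (j + 1) i} ≤ (2 ^ (j + 6)) ^ 2 * θ ^ 2 := by
  set m := 2 ^ (j + 6) with hm
  calc μ {ω | ¬ GoodBlock (w ω) (j + 1) i}
      ≤ μ (⋃ p ∈ (Finset.range m).offDiag, {ω | ¬ GoodBlock (w ω) j (i * m + p.1)} ∩
          {ω | ¬ GoodBlock (w ω) j (i * m + p.2)}) :=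
        measure_mono fun ω hω => by
          simp only [GoodBlock, Set.mem_ofPred_eq] at hω
          push Not at hω
          obtain ⟨t₁, ht₁, t₂, ht₂, hne, h₁, h₂⟩ := hω
          exact Set.mem_iUnion₂.2 ⟨(t₁, t₂),
            Finset.mem_offDiag.2 ⟨Finset.mem_range.2 ht₁, Finset.mem_range.2 ht₂, hne⟩, h₁, h₂⟩
    _ ≤ ∑ p ∈ (Finset.range m).offDiag, μ ({ω | ¬ GoodBlock (w ω) j (i * m + p.1)} ∩
          {ω | ¬ GoodBlock (w ω) j (i * m + p.2)}) := measure_biUnion_finset_le _ _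
    _ ≤ ∑ _p ∈ (Finset.range m).offDiag, θ * θ := Finset.sum_le_sum fun p hp => by
          rw [measure_inter_not_goodBlock_eq_mul hmeas hind
            (by simpa using (Finset.mem_offDiag.1 hp).2.2)]
          exact mul_le_mul' (hθ _) (hθ _)
    _ ≤ (2 ^ (j + 6)) ^ 2 * θ ^ 2 := by
          rw [Finset.sum_const, Finset.offDiag_card, Finset.card_range, nsmul_eq_mul, ← sq θ]
          gcongr
          calc ((m * m - m : ℕ) : ℝ≥0∞) ≤ (m * m : ℕ) := Nat.cast_le.2 (Nat.sub_le _ _)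
            _ = (2 ^ (j + 6)) ^ 2 := by rw [hm]; push_cast; ring

lemma two_pow_mul_inv_two_pow_of_eq_add {k e e' : ℕ} (h : e = k + e') :
    (2 : ℝ≥0∞) ^ k * 2⁻¹ ^ e = 2⁻¹ ^ e' := by
  rw [h, pow_add, ← mul_assoc, ← mul_pow, ENNReal.mul_inv_cancel two_ne_zero ENNReal.ofNat_ne_top,
    one_pow, one_mul]

/-- Chosen so that `2 * badExp j = 2 * (j + 6) + badExp (j + 1)`, matching the step
`θ ↦ (2 ^ (j + 6)) ^ 2 * θ ^ 2`. -/
def badExp (j : ℕ) : ℕ := 2 ^ (j + 5) + 2 * j + 14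

lemma measure_not_goodBlock_le [IsProbabilityMeasure μ] {p : ℝ} (hp : 1 - 2⁻¹ ^ 52 ≤ p)
    (hw : IsBernoulliField μ p w) (j i : ℕ) :
    μ {ω | ¬ GoodBlock (w ω) j i} ≤ 2⁻¹ ^ badExp j := by
  induction j generalizing i with
  | zero =>
    have hsite x : μ {ω | ¬ 1 ≤ w ω x} ≤ 2⁻¹ ^ 52 :=
      calc μ {ω | ¬ 1 ≤ w ω x} ≤ μ {ω | w ω x = 1}ᶜ := measure_mono fun ω hω h1 => hω h1.ge
        _ = 1 - ENNReal.ofReal p := by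
          have hms : MeasurableSet {ω | w ω x = 1} := (hw.1 x) (measurableSet_singleton 1)
          rw [prob_compl_eq_one_sub hms, hw.2.2.1 x]
        _ ≤ 1 - ENNReal.ofReal (1 - 2⁻¹ ^ 52) := tsub_le_tsub_left (ENNReal.ofReal_le_ofReal hp) 1
        _ = 2⁻¹ ^ 52 := by
          rw [ENNReal.ofReal_sub _ (by positivity), ENNReal.ofReal_one, ENNReal.ofReal_pow
            (by norm_num), ENNReal.ofReal_inv_of_pos two_pos, ENNReal.ofReal_ofNat,
            ENNReal.sub_sub_cancel ENNReal.one_ne_top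
              (pow_le_one₀ zero_le (ENNReal.inv_le_one.2 one_le_two))]
    refine (measure_not_goodBlock_zero_le hsite i).trans_eq ?_
    rw [show (64 : ℝ≥0∞) = 2 ^ 6 by norm_num]
    exact two_pow_mul_inv_two_pow_of_eq_add (by norm_num [badExp])
  | succ j ih =>
    refine (measure_not_goodBlock_succ_le hw.1 hw.2.2.2 ih i).trans_eq ?_
    rw [← pow_mul, ← pow_mul]
    exact two_pow_mul_inv_two_pow_of_eq_add (by simp only [badExp]; ring)

lemma tsum_three_mul_inv_two_pow_badExp_lt_one : ∑' j, 3 * (2⁻¹ : ℝ≥0∞) ^ badExp j < 1 :=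
  calc ∑' j, 3 * (2⁻¹ : ℝ≥0∞) ^ badExp j ≤ ∑' j : ℕ, 2⁻¹ ^ j * 2⁻¹ ^ 2 :=
        ENNReal.tsum_le_tsum fun j => by
          rw [← pow_add, ← two_pow_mul_inv_two_pow_of_eq_add (show j + 4 = 2 + (j + 2) by ring)]
          have hj : j + 4 ≤ badExp j := by simp only [badExp]; linarith [Nat.zero_le (2 ^ (j + 5))]
          exact mul_le_mul' (by norm_num) (pow_le_pow_right_of_le_one'
            (ENNReal.inv_le_one.2 one_le_two) hj)
    _ = 2⁻¹ := by
          rw [ENNReal.tsum_mul_right, ENNReal.tsum_geometric_two, sq, ← mul_assoc,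
            ENNReal.mul_inv_cancel two_ne_zero ENNReal.ofNat_ne_top, one_mul]
    _ < 1 := ENNReal.inv_lt_one.2 ENNReal.one_lt_two

end Probability

/-- Bernoulli CMP on `ℕ`: for any `α ≥ 1` there is `p < 1` such that, for any i.i.d.
Bernoulli(`p`) family of weights, the CMP `𝒞(ℕ, r, α)` contains an infinite cluster with
positive probability; i.e. `p_c(α) < 1`. -/
theorem bernoulli_CMP_on_N_supercritical (α : ℝ) (hα : 1 ≤ α) :
    ∃ p : ℝ, 0 ≤ p ∧ p < 1 ∧
      ∀ (Ω : Type) [MeasurableSpace Ω] (μ : Measure Ω), IsProbabilityMeasure μ →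
        ∀ w : Ω → ℕ → ℝ≥0, IsBernoulliField μ p w →
          0 < μ {ω | HasInfiniteCluster pathGraphN (w ω) α} := by
  refine ⟨1 - 2⁻¹ ^ 52, by norm_num, by norm_num, fun Ω _ μ _ w hw => ?_⟩
  have hbad := measure_not_goodBlock_le le_rfl hw
  have hsub : {ω | HasInfiniteCluster pathGraphN (w ω) α}ᶜ ⊆ ⋃ j, ({ω | ¬ GoodBlock (w ω) j 0} ∪
      {ω | ¬ GoodBlock (w ω) j 1} ∪ {ω | ¬ GoodBlock (w ω) j 2}) := by
    intro ω hω
    by_contra h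
    simp only [Set.mem_iUnion, Set.mem_union, Set.mem_ofPred_eq, not_exists, not_or,
      not_not] at h
    exact hω (hasInfiniteCluster_of_goodBlock hα fun j => ⟨(h j).1.1, (h j).1.2, (h j).2⟩)
  have hlt : μ {ω | HasInfiniteCluster pathGraphN (w ω) α}ᶜ < 1 :=
    calc _ ≤ ∑' j, 3 * (2⁻¹ : ℝ≥0∞) ^ badExp j :=
          (measure_mono hsub).trans <| (measure_iUnion_le _).trans <| ENNReal.tsum_le_tsum fun j =>
            ((measure_union_le _ _).trans (add_le_add_left (measure_union_le _ _) _)).trans <|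
              (add_le_add (add_le_add (hbad j 0) (hbad j 1)) (hbad j 2)).trans_eq (by ring)
      _ < 1 := tsum_three_mul_inv_two_pow_badExp_lt_one
  have := measure_univ_le_add_compl (μ := μ) {ω | HasInfiniteCluster pathGraphN (w ω) α}
  rw [measure_univ] at this
  exact pos_iff_ne_zero.2 fun h0 => (this.trans_lt (by rwa [h0, zero_add])).false

end CMPPaper
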